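/- Let ρ_1, ρ_2 be positive definite Hermitian matrices on a finite-dimensional complex inner product space with Tr ρ_1 = Tr ρ_2 = 1, and define ψ(t) := log Tr[ρ_1^t ρ_2^{1−t}] for t ∈ [0,1] (real powers via the functional calculus). Then: (i) ψ(1) = 0; (ii) ψ is differentiable on (0,1); (iii) lim_{t↗1} ψ'(t) = Tr[ρ_1(log ρ_1 − log ρ_2)]; and (iv) sup_{0 ≤ t < 1} (−ψ(t))/(1−t) = Tr[ρ_1(log ρ_1 − log ρ_2)], i.e., the Hoeffding distance with parameter 0 equals the relative entropy S(ρ_1‖ρ_2). -/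

import Mathlib

open Matrix Filter Set
open scoped ComplexOrder

noncomputable section

variable {n : Type*} [Fintype n] [DecidableEq n]

/-- Real power of a positive matrix via the continuous functional calculus. -/
def mpow (A : Matrix n n ℂ) (t : ℝ) : Matrix n n ℂ := cfc (fun x : ℝ => x ^ t) A

/-- Logarithm of a positive definite matrix via the continuous functional calculus. -/
def mlog (A : Matrix n n ℂ) : Matrix n n ℂ := cfc Real.log A

/-- `ψ(t) = log Tr[ρ₁^t ρ₂^{1−t}]`. -/
def psiStates (ρ₁ ρ₂ : Matrix n n ℂ) (t : ℝ) : ℝ :=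
  Real.log ((mpow ρ₁ t * mpow ρ₂ (1 - t)).trace.re)

/-!
Diagonalise `ρ₁ = ∑ λᵢ uᵢuᵢᴴ` and `ρ₂ = ∑ μⱼ vⱼvⱼᴴ`. Then `Tr ρ₁^t ρ₂^{1-t} = ∑ cᵢⱼ λᵢ^t μⱼ^{1-t}`
with weights `cᵢⱼ = |⟨uᵢ, vⱼ⟩|² ≥ 0`, so `ψ` is the logarithm of a positive combination of
exponentials `t ↦ e^{t (log λᵢ - log μⱼ)}`, hence convex (Cauchy–Schwarz gives `ψ'' ≥ 0`).
Moreover `ψ(1) = log Tr ρ₁ = 0` and `ψ'(1) = ∑ cᵢⱼ λᵢ (log λᵢ - log μⱼ) = Tr ρ₁ (log ρ₁ - log ρ₂)`.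
Since `ψ(1) = 0`, `-ψ(t)/(1-t)` is the slope of the chord of `ψ` over `[t, 1]`, which for a convex
function increases to `ψ'(1)` as `t ↗ 1`.
-/

theorem ConvexOn.ciSup_slope_Ico_eq {f : ℝ → ℝ} {x y f' : ℝ} (hxy : x < y)
    (hf : ConvexOn ℝ (Icc x y) f) (hf' : HasDerivWithinAt f f' (Iio y) y) :
    ⨆ t : Ico x y, slope f t y = f' := by
  have : Nonempty (Ico x y) := ⟨⟨x, left_mem_Ico.2 hxy⟩⟩
  have hle : ∀ t : Ico x y, slope f t y ≤ f' := fun t =>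
    hf.slope_le_of_hasDerivWithinAt_Iio (Ico_subset_Icc_self t.2) (right_mem_Icc.2 hxy.le)
      t.2.2 hf'
  have hbdd : BddAbove (range fun t : Ico x y => slope f t y) := ⟨f', forall_mem_range.2 hle⟩
  refine le_antisymm (ciSup_le hle) <|
    le_of_tendsto ((hasDerivWithinAt_iff_tendsto_slope' self_notMem_Iio).1 hf') ?_
  filter_upwards [Ioo_mem_nhdsLT hxy] with t ht
  rw [slope_comm]
  exact le_ciSup hbdd ⟨t, Ioo_subset_Ico_self ht⟩

def tiltedMoment {ι : Type*} [Fintype ι] (c a b : ι → ℝ) (m : ℕ) (t : ℝ) : ℝ :=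
  ∑ p, c p * a p ^ t * b p ^ (1 - t) * (Real.log (a p) - Real.log (b p)) ^ m

section tiltedMoment

variable {ι : Type*} {c a b : ι → ℝ}

theorem tiltedMoment_summand_nonneg (hc : ∀ p, 0 ≤ c p) (ha : ∀ p, 0 < a p)
    (hb : ∀ p, 0 < b p) (t : ℝ) (p : ι) : 0 ≤ c p * a p ^ t * b p ^ (1 - t) := by
  have := ha p; have := hb p; have := hc p; positivity

variable [Fintype ι]

theorem tiltedMoment_one_right (m : ℕ) :
    tiltedMoment c a b m 1 = ∑ p, c p * a p * (Real.log (a p) - Real.log (b p)) ^ m := by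
  simp only [tiltedMoment, Real.rpow_one, sub_self, Real.rpow_zero, mul_one]

theorem hasDerivAt_tiltedMoment (ha : ∀ p, 0 < a p) (hb : ∀ p, 0 < b p) (m : ℕ) (t : ℝ) :
    HasDerivAt (tiltedMoment c a b m) (tiltedMoment c a b (m + 1) t) t := by
  refine HasDerivAt.fun_sum fun p _ => ?_
  have hat := (hasDerivAt_id t).const_rpow (ha p)
  have hbt := ((hasDerivAt_id t).const_sub 1).const_rpow (hb p)
  refine (((hat.const_mul (c p)).mul hbt).mul_const _).congr_deriv ?_
  simp only [id]
  ring

theorem continuous_tiltedMoment (ha : ∀ p, 0 < a p) (hb : ∀ p, 0 < b p) (m : ℕ) :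
    Continuous (tiltedMoment c a b m) :=
  continuous_iff_continuousAt.2 fun t => (hasDerivAt_tiltedMoment ha hb m t).continuousAt

theorem tiltedMoment_zero_pos (hc : ∀ p, 0 ≤ c p) (ha : ∀ p, 0 < a p) (hb : ∀ p, 0 < b p)
    (hc₀ : c ≠ 0) (t : ℝ) : 0 < tiltedMoment c a b 0 t := by
  obtain ⟨q, hq⟩ := Function.ne_iff.1 hc₀
  refine Finset.sum_pos' (fun p _ => by simpa using tiltedMoment_summand_nonneg hc ha hb t p)
    ⟨q, Finset.mem_univ q, ?_⟩
  have := (hc q).lt_of_ne' hq; have := ha q; have := hb q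
  simp only [pow_zero, mul_one]
  positivity

theorem sq_tiltedMoment_one_le (hc : ∀ p, 0 ≤ c p) (ha : ∀ p, 0 < a p) (hb : ∀ p, 0 < b p)
    (t : ℝ) :
    tiltedMoment c a b 1 t ^ 2 ≤ tiltedMoment c a b 0 t * tiltedMoment c a b 2 t := by
  simp only [tiltedMoment, pow_zero, mul_one]
  have hw := tiltedMoment_summand_nonneg hc ha hb t
  refine Finset.sum_sq_le_sum_mul_sum_of_sq_le_mul _ (fun p _ => hw p)
    (fun p _ => mul_nonneg (hw p) (sq_nonneg _)) fun p _ => le_of_eq ?_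
  ring

theorem convexOn_log_tiltedMoment_zero (hc : ∀ p, 0 ≤ c p) (ha : ∀ p, 0 < a p)
    (hb : ∀ p, 0 < b p) (hc₀ : c ≠ 0) :
    ConvexOn ℝ univ fun t => Real.log (tiltedMoment c a b 0 t) := by
  have hpos := tiltedMoment_zero_pos hc ha hb hc₀
  have hG := hasDerivAt_tiltedMoment (c := c) ha hb
  refine convexOn_of_hasDerivWithinAt2_nonneg convex_univ
    (fun t _ => ((hG 0 t).log (hpos t).ne').continuousAt.continuousWithinAt)
    (fun t _ => ((hG 0 t).log (hpos t).ne').hasDerivWithinAt)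
    (fun t _ => ((hG 1 t).div (hG 0 t) (hpos t).ne').hasDerivWithinAt)
    fun t _ => div_nonneg ?_ (sq_nonneg _)
  nlinarith [sq_tiltedMoment_one_le hc ha hb t]

end tiltedMoment

theorem Matrix.trace_diagonal_mul_mul_diagonal_mul_conjTranspose {𝕜 m : Type*} [RCLike 𝕜]
    [Fintype m] [DecidableEq m] (d : m → 𝕜) (W : Matrix m n 𝕜) (e : n → 𝕜) :
    (diagonal d * W * diagonal e * Wᴴ).trace = ∑ i, ∑ j, d i * e j * (‖W i j‖ ^ 2 : ℝ) := by
  rw [Matrix.mul_assoc (diagonal d * W), Matrix.trace]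
  refine Finset.sum_congr rfl fun i _ => ?_
  rw [diag_apply, mul_apply]
  refine Finset.sum_congr rfl fun j _ => ?_
  rw [diagonal_mul, diagonal_mul, conjTranspose_apply, RCLike.ofReal_pow, ← RCLike.mul_conj,
    RCLike.star_def]
  ring

namespace Matrix.IsHermitian

variable {𝕜 : Type*} [RCLike 𝕜] {A B : Matrix n n 𝕜}

def overlapWeight (hA : A.IsHermitian) (hB : B.IsHermitian) (p : n × n) : ℝ :=
  ‖((hA.eigenvectorUnitary : Matrix n n 𝕜)ᴴ * hB.eigenvectorUnitary) p.1 p.2‖ ^ 2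

theorem trace_cfc_mul_cfc (hA : A.IsHermitian) (hB : B.IsHermitian) (f g : ℝ → ℝ) :
    (cfc f A * cfc g B).trace = ((∑ p, overlapWeight hA hB p *
      f (hA.eigenvalues p.1) * g (hB.eigenvalues p.2) : ℝ) : 𝕜) := by
  set U := (hA.eigenvectorUnitary : Matrix n n 𝕜)
  set V := (hB.eigenvectorUnitary : Matrix n n 𝕜)
  have hcyc : (cfc f A * cfc g B).trace = (diagonal (RCLike.ofReal ∘ f ∘ hA.eigenvalues) *
      (Uᴴ * V) * diagonal (RCLike.ofReal ∘ g ∘ hB.eigenvalues) * (Uᴴ * V)ᴴ).trace := by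
    rw [hA.cfc_eq, hB.cfc_eq, IsHermitian.cfc, IsHermitian.cfc, Unitary.conjStarAlgAut_apply,
      Unitary.conjStarAlgAut_apply]
    simp only [star_eq_conjTranspose, conjTranspose_mul, conjTranspose_conjTranspose,
      Matrix.mul_assoc]
    rw [trace_mul_comm]
    simp only [Matrix.mul_assoc]
    rfl
  rw [hcyc, trace_diagonal_mul_mul_diagonal_mul_conjTranspose, Fintype.sum_prod_type]
  push_cast
  refine Finset.sum_congr rfl fun i _ => Finset.sum_congr rfl fun j _ => ?_
  simp only [overlapWeight, Function.comp_apply]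
  push_cast
  ring

end Matrix.IsHermitian

section states

variable {ρ₁ ρ₂ : Matrix n n ℂ} (h₁ : ρ₁.IsHermitian) (h₂ : ρ₂.IsHermitian)

theorem Matrix.IsHermitian.re_trace_cfc_mul_cfc (f g : ℝ → ℝ) :
    (cfc f ρ₁ * cfc g ρ₂).trace.re =
      ∑ p, h₁.overlapWeight h₂ p * f (h₁.eigenvalues p.1) * g (h₂.eigenvalues p.2) := by
  rw [h₁.trace_cfc_mul_cfc h₂]
  exact Complex.ofReal_re _

theorem psiStates_eq_log_tiltedMoment :
    psiStates ρ₁ ρ₂ = fun t => Real.log (tiltedMoment (h₁.overlapWeight h₂)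
      (h₁.eigenvalues ∘ Prod.fst) (h₂.eigenvalues ∘ Prod.snd) 0 t) := by
  ext t
  simp only [psiStates, mpow, h₁.re_trace_cfc_mul_cfc h₂, tiltedMoment, pow_zero, mul_one,
    Function.comp_apply]

theorem re_trace_eq_tiltedMoment :
    ρ₁.trace.re = tiltedMoment (h₁.overlapWeight h₂)
      (h₁.eigenvalues ∘ Prod.fst) (h₂.eigenvalues ∘ Prod.snd) 0 1 := by
  conv_lhs => rw [← mul_one ρ₁, ← cfc_id' ℝ ρ₁, ← cfc_const_one ℝ ρ₂]
  rw [h₁.re_trace_cfc_mul_cfc h₂, tiltedMoment_one_right]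
  simp

theorem re_trace_mul_mlog_sub_eq_tiltedMoment :
    (ρ₁ * (mlog ρ₁ - mlog ρ₂)).trace.re = tiltedMoment (h₁.overlapWeight h₂)
      (h₁.eigenvalues ∘ Prod.fst) (h₂.eigenvalues ∘ Prod.snd) 1 1 := by
  have hcont (f : ℝ → ℝ) : ContinuousOn f (spectrum ℝ ρ₁) :=
    ρ₁.finite_real_spectrum.continuousOn f
  have hlog₁ : ρ₁ * mlog ρ₁ =
      cfc (fun x : ℝ => x * Real.log x) ρ₁ * cfc (fun _ : ℝ => (1 : ℝ)) ρ₂ := by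
    rw [cfc_const_one ℝ ρ₂, mul_one, cfc_mul _ _ ρ₁ (hcont _) (hcont _), cfc_id' ℝ ρ₁, mlog]
  have hlog₂ : ρ₁ * mlog ρ₂ = cfc (id : ℝ → ℝ) ρ₁ * cfc Real.log ρ₂ := by
    rw [cfc_id ℝ ρ₁, mlog]
  rw [mul_sub, trace_sub, Complex.sub_re, hlog₁, hlog₂, h₁.re_trace_cfc_mul_cfc h₂,
    h₁.re_trace_cfc_mul_cfc h₂, tiltedMoment_one_right, ← Finset.sum_sub_distrib]
  refine Finset.sum_congr rfl fun p _ => ?_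
  simp only [Function.comp_apply, id]
  ring

end states

theorem hoeffding_zero_eq_relative_entropy_general
    (ρ₁ ρ₂ : Matrix n n ℂ) (hρ₁ : ρ₁.PosDef) (hρ₂ : ρ₂.PosDef)
    (hτ₁ : ρ₁.trace = 1) :
    psiStates ρ₁ ρ₂ 1 = 0 ∧
      (∃ D : ℝ → ℝ,
        (∀ t ∈ Set.Ioo (0 : ℝ) 1, HasDerivAt (psiStates ρ₁ ρ₂) (D t) t) ∧
        Tendsto D (nhdsWithin 1 (Set.Iio 1))
          (nhds ((ρ₁ * (mlog ρ₁ - mlog ρ₂)).trace.re))) ∧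
      (⨆ t : Set.Ico (0 : ℝ) 1, (-psiStates ρ₁ ρ₂ t) / (1 - (t : ℝ))) =
        (ρ₁ * (mlog ρ₁ - mlog ρ₂)).trace.re := by
  have h₁ := hρ₁.isHermitian
  have h₂ := hρ₂.isHermitian
  have hψ := psiStates_eq_log_tiltedMoment h₁ h₂
  have hG₁ := (re_trace_eq_tiltedMoment h₁ h₂).symm
  rw [hτ₁, Complex.one_re] at hG₁
  rw [re_trace_mul_mlog_sub_eq_tiltedMoment h₁ h₂]
  set c := h₁.overlapWeight h₂
  set G := tiltedMoment c (h₁.eigenvalues ∘ Prod.fst) (h₂.eigenvalues ∘ Prod.snd)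
  have hc : ∀ p, 0 ≤ c p := fun _ => sq_nonneg _
  have ha : ∀ p : n × n, 0 < (h₁.eigenvalues ∘ Prod.fst) p := fun p => hρ₁.eigenvalues_pos p.1
  have hb : ∀ p : n × n, 0 < (h₂.eigenvalues ∘ Prod.snd) p := fun p => hρ₂.eigenvalues_pos p.2
  have hc₀ : c ≠ 0 := by
    rintro h
    simp [G, h, tiltedMoment] at hG₁
  have hpos := tiltedMoment_zero_pos hc ha hb hc₀
  have hψ₁ : psiStates ρ₁ ρ₂ 1 = 0 := by simp only [hψ, hG₁, Real.log_one]
  have hderiv (t : ℝ) : HasDerivAt (psiStates ρ₁ ρ₂) (G 1 t / G 0 t) t :=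
    hψ ▸ (hasDerivAt_tiltedMoment ha hb 0 t).log (hpos t).ne'
  have hD₁ : G 1 1 / G 0 1 = G 1 1 := by rw [hG₁, div_one]
  refine ⟨hψ₁, ⟨_, fun t _ => hderiv t, ?_⟩, ?_⟩
  · rw [← hD₁]
    exact (((continuous_tiltedMoment ha hb 1).div (continuous_tiltedMoment ha hb 0)
      fun t => (hpos t).ne').tendsto 1).mono_left nhdsWithin_le_nhds
  · have hconv : ConvexOn ℝ (Icc 0 1) (psiStates ρ₁ ρ₂) := hψ ▸
      (convexOn_log_tiltedMoment_zero hc ha hb hc₀).subset (subset_univ _) (convex_Icc 0 1)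
    rw [← hD₁, ← hconv.ciSup_slope_Ico_eq zero_lt_one (hderiv 1).hasDerivWithinAt]
    refine iSup_congr fun t => ?_
    rw [slope_def_field, hψ₁, zero_sub]

/-- **Hoeffding distance with parameter 0 equals the relative entropy.**  For faithful density
matrices `ρ₁, ρ₂` and `ψ(t) = log Tr[ρ₁^t ρ₂^{1−t}]`: (i) `ψ(1) = 0`; (ii) `ψ` is
differentiable on `(0,1)`; (iii) `ψ'(t) → Tr[ρ₁(log ρ₁ − log ρ₂)]` as `t ↗ 1`; and (iv)
`sup_{0 ≤ t < 1} (−ψ(t))/(1−t) = Tr[ρ₁(log ρ₁ − log ρ₂)] = S(ρ₁‖ρ₂)`. -/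
theorem hoeffding_zero_eq_relative_entropy
    (ρ₁ ρ₂ : Matrix n n ℂ) (hρ₁ : ρ₁.PosDef) (hρ₂ : ρ₂.PosDef)
    (hτ₁ : ρ₁.trace = 1) (hτ₂ : ρ₂.trace = 1) :
    psiStates ρ₁ ρ₂ 1 = 0 ∧
      (∃ D : ℝ → ℝ,
        (∀ t ∈ Set.Ioo (0 : ℝ) 1, HasDerivAt (psiStates ρ₁ ρ₂) (D t) t) ∧
        Tendsto D (nhdsWithin 1 (Set.Iio 1))
          (nhds ((ρ₁ * (mlog ρ₁ - mlog ρ₂)).trace.re))) ∧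
      (⨆ t : Set.Ico (0 : ℝ) 1, (-psiStates ρ₁ ρ₂ t) / (1 - (t : ℝ))) =
        (ρ₁ * (mlog ρ₁ - mlog ρ₂)).trace.re :=
  hoeffding_zero_eq_relative_entropy_general ρ₁ ρ₂ hρ₁ hρ₂ hτ₁

end
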